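/- arXiv:2407.20913 — 4 statements merged into one kernel-verified Lean document; each statement's English description precedes it below -/
import Mathlib

section
/- Let D be a finite nonempty type and let c : D → D → ℝ be a cost function with c i i = 0 for every i ∈ D and satisfying the strict triangular condition c i k < c i j + c j k for all i, j, k ∈ D with j ≠ i and j ≠ k. Let r > 0, let N ≥ 1, let 0 ≤ τ_1 ≤ τ_2 ≤ ... ≤ τ_N be real numbers, and let ξ : {0,1,...,N} → D be any sequence with ξ_0 = i. Then − ∑_{n=1}^{N} e^{−r τ_n} · c (ξ_{n−1}) (ξ_n) ≤ max_{k ∈ D} (− c i k), or equivalently ∑_{n=1}^{N} e^{−r τ_n} · c (ξ_{n−1}) (ξ_n) ≥ min_{k ∈ D} c i k. -/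
/-!
Write `S n` for the undiscounted cost of the first `n` switches and `m = min_k c i k ≤ 0`.
The triangle inequality collapses the path `ξ 0 → ⋯ → ξ n` into one switch, so `S n ≥ c i (ξ n) ≥ m`.
Summation by parts expresses the discounted cost as `w_N S_N + ∑ (w_n - w_{n+1}) S_n`
with nonnegative coefficients, hence it is at least `w_1 m ≥ m`.
-/

open Finset

theorem sum_Icc_one_eq_sum_range_succ {M : Type*} [AddCommMonoid M] (f : ℕ → M) (N : ℕ) :
    ∑ n ∈ Icc 1 N, f n = ∑ i ∈ range N, f (i + 1) := by
  rw [range_eq_Ico, ← Ico_add_one_right_eq_Icc, sum_Ico_add' f 0 N 1]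

theorem mul_le_sum_range_mul_of_antitone {w a : ℕ → ℝ} {m : ℝ} {N : ℕ}
    (hw : ∀ i, i + 1 < N → w (i + 1) ≤ w i) (hw_nonneg : 0 ≤ w (N - 1))
    (hS : ∀ n ≤ N, m ≤ ∑ i ∈ range n, a i) :
    w 0 * m ≤ ∑ i ∈ range N, w i * a i := by
  have hstep : ∀ i ∈ range (N - 1),
      (w (i + 1) - w i) * ∑ j ∈ range (i + 1), a j ≤ (w (i + 1) - w i) * m := by
    intro i hi
    rw [mem_range] at hi
    exact mul_le_mul_of_nonpos_left (hS (i + 1) (by omega)) (by linarith [hw i (by omega)])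
  calc w 0 * m = w (N - 1) * m - ∑ i ∈ range (N - 1), (w (i + 1) - w i) * m := by
        rw [← sum_mul, sum_range_sub]; ring
    _ ≤ w (N - 1) * ∑ i ∈ range N, a i
          - ∑ i ∈ range (N - 1), (w (i + 1) - w i) * ∑ j ∈ range (i + 1), a j :=
        sub_le_sub (mul_le_mul_of_nonneg_left (hS N le_rfl) hw_nonneg) (sum_le_sum hstep)
    _ = ∑ i ∈ range N, w i * a i := by
        simpa only [smul_eq_mul] using (sum_range_by_parts w a N).symm

section Triangle

variable {D : Type*} {c : D → D → ℝ}

theorem le_add_of_strict_triangle (hself : ∀ i, c i i = 0)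
    (htri : ∀ i j k, j ≠ i → j ≠ k → c i k < c i j + c j k) (i j k : D) :
    c i k ≤ c i j + c j k := by
  by_cases hji : j = i
  · simp [hji, hself]
  by_cases hjk : j = k
  · simp [hjk, hself]
  exact (htri i j k hji hjk).le

theorem le_sum_range_of_triangle (hself : ∀ i, c i i = 0)
    (htri : ∀ i j k, c i k ≤ c i j + c j k) (ξ : ℕ → D) (n : ℕ) :
    c (ξ 0) (ξ n) ≤ ∑ k ∈ range n, c (ξ k) (ξ (k + 1)) := by
  induction n with
  | zero => simp [hself]
  | succ n ih =>
    rw [sum_range_succ]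
    linarith [htri (ξ 0) (ξ n) (ξ (n + 1))]

end Triangle

theorem switching_cost_lower_bound_general
    {D : Type*} [Fintype D] [Nonempty D] (c : D → D → ℝ)
    (hself : ∀ i, c i i = 0)
    (htri : ∀ i j k, j ≠ i → j ≠ k → c i k < c i j + c j k)
    (r : ℝ) (hr : 0 < r) (N : ℕ)
    (τ : ℕ → ℝ) (hτ1 : 0 ≤ τ 1)
    (hτmono : ∀ n, 1 ≤ n → n < N → τ n ≤ τ (n + 1))
    (ξ : ℕ → D) (i : D) (hξ0 : ξ 0 = i) :
    -(∑ n ∈ Finset.Icc 1 N, Real.exp (-(r * τ n)) * c (ξ (n - 1)) (ξ n))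
      ≤ Finset.univ.sup' Finset.univ_nonempty (fun k => -c i k) := by
  obtain ⟨k₀, hk₀⟩ := Finite.exists_min (c i)
  have hpath : ∀ n, c i k₀ ≤ ∑ k ∈ range n, c (ξ k) (ξ (k + 1)) := fun n =>
    (hk₀ (ξ n)).trans <| hξ0 ▸ le_sum_range_of_triangle hself
      (le_add_of_strict_triangle hself htri) ξ n
  have hdisc := mul_le_sum_range_mul_of_antitone (w := fun n => Real.exp (-(r * τ (n + 1))))
    (fun n hn => Real.exp_le_exp.mpr <| by nlinarith [hτmono (n + 1) (by omega) hn])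
    (Real.exp_pos _).le (fun n _ => hpath n)
  have hw₀ : Real.exp (-(r * τ 1)) ≤ 1 := Real.exp_le_one_iff.mpr <| by nlinarith
  have hmin_nonpos : c i k₀ ≤ 0 := hself i ▸ hk₀ i
  have hcost : c i k₀ ≤ ∑ n ∈ Icc 1 N, Real.exp (-(r * τ n)) * c (ξ (n - 1)) (ξ n) := by
    rw [sum_Icc_one_eq_sum_range_succ]
    simp only [add_tsub_cancel_right, zero_add] at hdisc ⊢
    calc c i k₀ ≤ Real.exp (-(r * τ 1)) * c i k₀ := le_mul_of_le_one_left hmin_nonpos hw₀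
      _ ≤ _ := hdisc
  exact le_sup'_of_le _ (mem_univ k₀) (neg_le_neg hcost)

/-- Lemma 2.2 (pathwise form): the total discounted switching cost of any finite
sequence of switches starting from regime `i` is bounded below by the smallest
one-step cost out of `i`. -/
theorem switching_cost_lower_bound
    {D : Type*} [Fintype D] [Nonempty D] (c : D → D → ℝ)
    (hself : ∀ i, c i i = 0)
    (htri : ∀ i j k, j ≠ i → j ≠ k → c i k < c i j + c j k)
    (r : ℝ) (hr : 0 < r) (N : ℕ) (hN : 1 ≤ N)
    (τ : ℕ → ℝ) (hτ1 : 0 ≤ τ 1)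
    (hτmono : ∀ n, 1 ≤ n → n < N → τ n ≤ τ (n + 1))
    (ξ : ℕ → D) (i : D) (hξ0 : ξ 0 = i) :
    -(∑ n ∈ Finset.Icc 1 N, Real.exp (-(r * τ n)) * c (ξ (n - 1)) (ξ n))
      ≤ Finset.univ.sup' Finset.univ_nonempty (fun k => -c i k) :=
  switching_cost_lower_bound_general c hself htri r hr N τ hτ1 hτmono ξ i hξ0
end

section
/- Theorem 4.1, case B1. In addition to the common setup, assume all four regime pairs share the same drift and volatility: b_{ij} = b and σ_{ij} = σ for all i, j ∈ {1,2} (hence K_{11} = K_{12} = K_{21} = K_{22} =: K), and assume c12 > 0, c21 > 0, χ12 > 0, χ21 > 0 (Condition B1). Then the quadruple v11(x) = v12(x) = v21(x) = v22(x) = K·x^γ solves the QVI system at every x > 0. -/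
/-- Generator of a one-dimensional geometric Brownian motion with drift `b` and
volatility `σ`: `(L v)(x) = (1/2)σ²x²v''(x) + b x v'(x)`. -/
noncomputable def Lop (b σ : ℝ) (v : ℝ → ℝ) (x : ℝ) : ℝ :=
  (1/2) * σ^2 * x^2 * deriv (deriv v) x + b * x * deriv v x

/-- The quadruple `(v11, v12, v21, v22)` solves the Isaacs system of
quasi-variational inequalities at the point `x`, with profit `f(x) = x^γ`. -/
def solvesQVI (r γ c12 c21 χ12 χ21 b11 σ11 b12 σ12 b21 σ21 b22 σ22 : ℝ)
    (v11 v12 v21 v22 : ℝ → ℝ) (x : ℝ) : Prop :=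
  max (min (r * v11 x - Lop b11 σ11 v11 x - x ^ γ) (v11 x - (v21 x - c12)))
      (v11 x - (v12 x + χ12)) = 0 ∧
  max (min (r * v12 x - Lop b12 σ12 v12 x - x ^ γ) (v12 x - (v22 x - c12)))
      (v12 x - (v11 x + χ21)) = 0 ∧
  max (min (r * v21 x - Lop b21 σ21 v21 x - x ^ γ) (v21 x - (v11 x - c21)))
      (v21 x - (v22 x + χ12)) = 0 ∧
  max (min (r * v22 x - Lop b22 σ22 v22 x - x ^ γ) (v22 x - (v12 x - c21)))
      (v22 x - (v21 x + χ21)) = 0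

/-! When the four value functions coincide, the switching terms of the QVI system are just the
costs, `v - (v - c) = c ≥ 0` and `v - (v + χ) = -χ ≤ 0`, so each row reduces to the HJB equation
`r v - L v = x^γ`. The power function `K x^γ` is an eigenfunction of `L`, and the choice
`K = 1 / (r - bγ + σ²γ(1-γ)/2)` makes it solve that equation. -/

theorem deriv_const_mul_rpow (K γ : ℝ) :
    deriv (fun y : ℝ => K * y ^ γ) = fun y => K * (γ * y ^ (γ - 1)) := by
  simp only [deriv_const_mul_field', Real.deriv_rpow_const']

theorem Lop_const_mul_rpow (b σ K γ : ℝ) {x : ℝ} (hx : 0 < x) :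
    Lop b σ (fun y => K * y ^ γ) x = (b * γ - (1/2) * σ^2 * γ * (1 - γ)) * (K * x ^ γ) := by
  have hx1 : x * x ^ (γ - 1) = x ^ γ := by
    rw [Real.rpow_sub_one hx.ne', mul_div_cancel₀ _ hx.ne']
  have hx2 : x ^ 2 * x ^ (γ - 2) = x ^ γ := by
    rw [Real.rpow_sub hx, Real.rpow_two, mul_div_cancel₀ _ (by positivity)]
  have hderiv2 : deriv (deriv fun y : ℝ => K * y ^ γ) x = K * γ * ((γ - 1) * x ^ (γ - 1 - 1)) := by
    simp only [← mul_assoc, deriv_const_mul_field', Real.deriv_rpow_const']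
  rw [Lop, hderiv2, deriv_const_mul_rpow, sub_sub, one_add_one_eq_two]
  linear_combination ((1/2) * σ^2 * K * γ * (γ - 1)) * hx2 + (b * K * γ) * hx1

theorem sub_Lop_const_mul_rpow {r b σ K γ : ℝ} (hK : K * (r - b*γ + (1/2)*σ^2*γ*(1-γ)) = 1)
    {x : ℝ} (hx : 0 < x) :
    r * (K * x ^ γ) - Lop b σ (fun y => K * y ^ γ) x - x ^ γ = 0 := by
  rw [Lop_const_mul_rpow b σ K γ hx]
  linear_combination x ^ γ * hK

theorem max_min_eq_zero {α : Type*} [LinearOrder α] [Zero α] {a b c : α}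
    (ha : a = 0) (hb : 0 ≤ b) (hc : c ≤ 0) : max (min a b) c = 0 := by
  rw [ha, min_eq_left hb, max_eq_left hc]

theorem solvesQVI_of_forall_eq {r γ c12 c21 χ12 χ21 b σ x : ℝ} {v : ℝ → ℝ}
    (hv : r * v x - Lop b σ v x - x ^ γ = 0)
    (hc12 : 0 ≤ c12) (hc21 : 0 ≤ c21) (hχ12 : 0 ≤ χ12) (hχ21 : 0 ≤ χ21) :
    solvesQVI r γ c12 c21 χ12 χ21 b σ b σ b σ b σ v v v v x := by
  refine ⟨?_, ?_, ?_, ?_⟩ <;> exact max_min_eq_zero hv (by linarith) (by linarith)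

theorem thm4_1_B1_general
    (r γ c12 c21 χ12 χ21 : ℝ)
    (b11 σ11 b12 σ12 b21 σ21 b22 σ22 : ℝ)
    (K11 : ℝ)
    (hd11 : 0 < r - b11*γ + (1/2)*σ11^2*γ*(1-γ))
    (hK11 : K11 = 1/(r - b11*γ + (1/2)*σ11^2*γ*(1-γ)))
    (heqb12 : b12 = b11) (heqb21 : b21 = b11) (heqb22 : b22 = b11)
    (heqσ12 : σ12 = σ11) (heqσ21 : σ21 = σ11) (heqσ22 : σ22 = σ11)
    (K : ℝ) (hK : K = K11)
    (hc12 : 0 < c12) (hc21 : 0 < c21) (hχ12 : 0 < χ12) (hχ21 : 0 < χ21)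
    :
    ∀ x : ℝ, 0 < x →
      solvesQVI r γ c12 c21 χ12 χ21 b11 σ11 b12 σ12 b21 σ21 b22 σ22
        (fun y => K * y ^ γ)
        (fun y => K * y ^ γ)
        (fun y => K * y ^ γ)
        (fun y => K * y ^ γ) x := by
  intro x hx
  subst heqb12 heqb21 heqb22 heqσ12 heqσ21 heqσ22 hK hK11
  exact solvesQVI_of_forall_eq (sub_Lop_const_mul_rpow (one_div_mul_cancel hd11.ne') hx)
    hc12.le hc21.le hχ12.le hχ21.le

theorem thm4_1_B1
    (r γ c12 c21 χ12 χ21 : ℝ)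
    (b11 σ11 b12 σ12 b21 σ21 b22 σ22 : ℝ)
    (K11 K12 K21 K22 : ℝ)
    (hr : 0 < r) (hγ0 : 0 < γ) (hγ1 : γ < 1)
    (hσ11 : 0 < σ11) (hσ12 : 0 < σ12) (hσ21 : 0 < σ21) (hσ22 : 0 < σ22)
    (hd11 : 0 < r - b11*γ + (1/2)*σ11^2*γ*(1-γ))
    (hd12 : 0 < r - b12*γ + (1/2)*σ12^2*γ*(1-γ))
    (hd21 : 0 < r - b21*γ + (1/2)*σ21^2*γ*(1-γ))
    (hd22 : 0 < r - b22*γ + (1/2)*σ22^2*γ*(1-γ))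
    (hrb11 : b11 < r) (hrb12 : b12 < r) (hrb21 : b21 < r) (hrb22 : b22 < r)
    (hK11 : K11 = 1/(r - b11*γ + (1/2)*σ11^2*γ*(1-γ)))
    (hK12 : K12 = 1/(r - b12*γ + (1/2)*σ12^2*γ*(1-γ)))
    (hK21 : K21 = 1/(r - b21*γ + (1/2)*σ21^2*γ*(1-γ)))
    (hK22 : K22 = 1/(r - b22*γ + (1/2)*σ22^2*γ*(1-γ)))
    (heqb12 : b12 = b11) (heqb21 : b21 = b11) (heqb22 : b22 = b11)
    (heqσ12 : σ12 = σ11) (heqσ21 : σ21 = σ11) (heqσ22 : σ22 = σ11)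
    (K : ℝ) (hK : K = K11)
    (hc12 : 0 < c12) (hc21 : 0 < c21) (hχ12 : 0 < χ12) (hχ21 : 0 < χ21)
    :
    ∀ x : ℝ, 0 < x →
      solvesQVI r γ c12 c21 χ12 χ21 b11 σ11 b12 σ12 b21 σ21 b22 σ22
        (fun y => K * y ^ γ)
        (fun y => K * y ^ γ)
        (fun y => K * y ^ γ)
        (fun y => K * y ^ γ) x :=
  thm4_1_B1_general r γ c12 c21 χ12 χ21 b11 σ11 b12 σ12 b21 σ21 b22 σ22 K11 hd11 hK11 heqb12 heqb21
    heqb22 heqσ12 heqσ21 heqσ22 K hK hc12 hc21 hχ12 hχ21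
end

section
/- Theorem 4.2, case B1. In addition to the common setup, assume b11 = b12, σ11 = σ12, b21 = b22, σ21 = σ22, and K₁ := K_{11} = K_{12} < K_{21} = K_{22} =: K₂; assume c12 > 0, c21 > 0, χ12 > 0, χ21 > 0 (Condition B1). Let m⁺ := m_{11}⁺ (= m_{12}⁺), x* := (m⁺·c12 / ((m⁺ − γ)·(K₂ − K₁)))^{1/γ} and A := (K₂ − K₁)·(γ/m⁺)·(x*)^{γ − m⁺}. Define v11(x) = v12(x) = K₁·x^γ + A·x^{m⁺} for 0 < x < x* and = K₂·x^γ − c12 for x ≥ x*, and v21(x) = v22(x) = K₂·x^γ for all x > 0. Then this quadruple solves the QVI system at every x > 0 with x ≠ x*. -/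
/-! Both `x ^ γ` and `x ^ m` are eigenfunctions of the generator: `x ^ γ` with eigenvalue
`gbmSymbol γ = r - 1/K`, and `x ^ m` with eigenvalue `r`. Hence below `x*` the first player's
value `K₁ x ^ γ + A x ^ m` and, everywhere, the second player's value `K₂ x ^ γ` solve their HJB
equations. The constants `x*`, `A` come from smooth fit with the switching payoff
`K₂ x ^ γ - c12`, and with them the obstacle inequality below `x*` is Young's inequality
`m t ^ γ ≤ (m - γ) + γ t ^ m` for `t = x / x*`, while the HJB inequality above `x*` reduces to
`r (m - γ) ≤ m (r - gbmSymbol γ)`, which holds because `γ < m`. The rows with `χ` are inactive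
since regimes with the same first index share their value.
-/

open Filter Topology

lemma Lop_congr {b σ x : ℝ} {f g : ℝ → ℝ} (h : f =ᶠ[𝓝 x] g) : Lop b σ f x = Lop b σ g x := by
  unfold Lop
  rw [h.deriv_eq, h.deriv.deriv_eq]

/-- The eigenvalue of `Lop b σ` on `x ↦ x ^ p`. -/
noncomputable def gbmSymbol (b σ p : ℝ) : ℝ := (1/2) * σ^2 * p * (p - 1) + b * p

lemma sub_gbmSymbol (b σ r γ : ℝ) :
    r - gbmSymbol b σ γ = r - b * γ + (1/2) * σ^2 * γ * (1 - γ) := by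
  unfold gbmSymbol; ring

lemma mul_sub_gbmSymbol_eq_one {b σ r γ K : ℝ} (hd : 0 < r - b * γ + (1/2) * σ^2 * γ * (1 - γ))
    (hK : K = 1 / (r - b * γ + (1/2) * σ^2 * γ * (1 - γ))) : K * (r - gbmSymbol b σ γ) = 1 := by
  rw [sub_gbmSymbol, hK, one_div_mul_cancel hd.ne']

lemma hasDerivAt_rpow_add_rpow_add_const (a p c q d : ℝ) {y : ℝ} (hy : y ≠ 0) :
    HasDerivAt (fun z : ℝ => a * z ^ p + c * z ^ q + d)
      (a * p * y ^ (p - 1) + c * q * y ^ (q - 1)) y :=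
  ((((Real.hasDerivAt_rpow_const (p := p) (Or.inl hy)).const_mul a).add
    ((Real.hasDerivAt_rpow_const (p := q) (Or.inl hy)).const_mul c)).add_const d).congr_deriv
    (by ring)

lemma Lop_of_eventuallyEq {b σ a p c q d x : ℝ} {f : ℝ → ℝ} (hx : 0 < x)
    (hf : f =ᶠ[𝓝 x] fun z => a * z ^ p + c * z ^ q + d) :
    Lop b σ f x = a * gbmSymbol b σ p * x ^ p + c * gbmSymbol b σ q * x ^ q := by
  rw [Lop_congr hf]
  have hderiv : deriv (fun z : ℝ => a * z ^ p + c * z ^ q + d)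
      =ᶠ[𝓝 x] fun z => (a * p) * z ^ (p - 1) + (c * q) * z ^ (q - 1) + 0 := by
    filter_upwards [compl_singleton_mem_nhds hx.ne'] with y hy
    rw [(hasDerivAt_rpow_add_rpow_add_const a p c q d hy).deriv]
    ring
  have hpow : ∀ s : ℝ, x ^ (2 : ℕ) * x ^ (s - 1 - 1) = x ^ s ∧ x * x ^ (s - 1) = x ^ s := fun s =>
    ⟨by rw [Real.rpow_sub hx, Real.rpow_sub hx, Real.rpow_one]; field_simp,
     by rw [Real.rpow_sub hx, Real.rpow_one]; field_simp⟩
  unfold Lop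
  rw [hderiv.deriv_eq, (hasDerivAt_rpow_add_rpow_add_const _ _ _ _ 0 hx.ne').deriv,
    (hasDerivAt_rpow_add_rpow_add_const a p c q d hx.ne').deriv]
  unfold gbmSymbol
  linear_combination (1/2 * σ^2 * a * p * (p - 1)) * (hpow p).1
    + (1/2 * σ^2 * c * q * (q - 1)) * (hpow q).1
    + (b * a * p) * (hpow p).2 + (b * c * q) * (hpow q).2

lemma gbmSymbol_eq_and_lt_of_lt {b σ r γ m : ℝ} (hσ : σ ≠ 0)
    (hm : m = 1/2 - b/σ^2 + √((1/2 - b/σ^2)^2 + 2*r/σ^2)) (hγ : gbmSymbol b σ γ < r) :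
    gbmSymbol b σ m = r ∧ γ < m := by
  set k := 1/2 - b/σ^2
  set D := k^2 + 2*r/σ^2
  have hσ2 : 0 < σ^2 / 2 := by positivity
  have hS : ∀ p, gbmSymbol b σ p - r = σ^2/2 * ((p - k)^2 - D) := by
    intro p; simp only [gbmSymbol, k, D]; field_simp; ring
  have hdisc : (γ - k)^2 < D := by
    have := hS γ
    nlinarith
  constructor
  · have hmD : (m - k)^2 = D := by
      rw [hm, add_sub_cancel_left, Real.sq_sqrt (by nlinarith)]
    linear_combination hS m + σ^2/2 * hmD
  · linarith [Real.lt_sqrt_of_sq_lt hdisc]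

lemma r_mul_sub_le_mul_sub_gbmSymbol {b σ r γ m : ℝ} (hSm : gbmSymbol b σ m = r)
    (hγ : 0 ≤ γ) (hγm : γ ≤ m) : r * (m - γ) ≤ m * (r - gbmSymbol b σ γ) := by
  have key : m * (r - gbmSymbol b σ γ) - r * (m - γ) = (1/2) * σ^2 * γ * (m * (m - γ)) := by
    rw [← hSm]; unfold gbmSymbol; ring
  have : 0 ≤ (1/2) * σ^2 * γ * (m * (m - γ)) := by
    have := sub_nonneg.2 hγm
    have : 0 ≤ m := hγ.trans hγm
    positivity
  linarith

lemma mul_rpow_le_sub_add_mul_rpow {γ m t : ℝ} (hγ : 0 < γ) (hγm : γ ≤ m) (ht : 0 ≤ t) :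
    m * t ^ γ ≤ (m - γ) + γ * t ^ m := by
  have hm : 0 < m := hγ.trans_le hγm
  have h := Real.geom_mean_le_arith_mean2_weighted (p₁ := 1) (p₂ := t ^ m)
    (sub_nonneg.2 ((div_le_one hm).2 hγm)) (div_pos hγ hm).le zero_le_one
    (Real.rpow_nonneg ht m) (sub_add_cancel 1 (γ / m))
  rw [Real.one_rpow, one_mul, mul_one, ← Real.rpow_mul ht, mul_div_cancel₀ _ hm.ne'] at h
  have := mul_le_mul_of_nonneg_left h hm.le
  field_simp at this
  linarith

section SmoothFit

variable {γ m δ c xs y : ℝ}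

lemma threshold_pos_and_smoothFit (hγ : 0 < γ) (hγm : γ < m) (hδ : 0 < δ) (hc : 0 < c)
    (hxs : xs = (m * c / ((m - γ) * δ)) ^ (1 / γ)) :
    0 < xs ∧ (m - γ) * δ * xs ^ γ = m * c := by
  have hmγ : 0 < m - γ := sub_pos.2 hγm
  have hq : 0 < m * c / ((m - γ) * δ) := by
    have := hγ.trans hγm; positivity
  refine ⟨hxs ▸ Real.rpow_pos_of_pos hq _, ?_⟩
  rw [hxs, ← Real.rpow_mul hq.le, one_div_mul_cancel hγ.ne', Real.rpow_one]
  field_simp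

lemma rpow_eq_rpow_mul_div_rpow (hxs : 0 < xs) (hy : 0 ≤ y) (p : ℝ) :
    y ^ p = xs ^ p * (y / xs) ^ p := by
  rw [← Real.mul_rpow hxs.le (div_nonneg hy hxs.le), mul_div_cancel₀ _ hxs.ne']

lemma rpow_sub_mul_rpow_eq (hxs : 0 < xs) (hy : 0 ≤ y) (γ m : ℝ) :
    xs ^ (γ - m) * y ^ m = xs ^ γ * (y / xs) ^ m := by
  rw [rpow_eq_rpow_mul_div_rpow hxs hy m, ← mul_assoc, ← Real.rpow_add hxs, sub_add_cancel]

/-- Equality holds at `y = xs`; `hfit` is the smooth-fit condition. -/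
lemma sub_smoothFit_le (hγ : 0 < γ) (hγm : γ ≤ m) (hδ : 0 ≤ δ) (hxs : 0 < xs)
    (hfit : (m - γ) * δ * xs ^ γ = m * c) (hy : 0 ≤ y) :
    δ * y ^ γ - δ * (γ / m) * xs ^ (γ - m) * y ^ m ≤ c := by
  have hm : 0 < m := hγ.trans_le hγm
  have hu : 0 ≤ y / xs := div_nonneg hy hxs.le
  have key : m * (δ * y ^ γ - δ * (γ / m) * xs ^ (γ - m) * y ^ m)
      = δ * xs ^ γ * (m * (y / xs) ^ γ - γ * (y / xs) ^ m) := by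
    rw [mul_assoc _ (xs ^ (γ - m)), rpow_sub_mul_rpow_eq hxs hy, rpow_eq_rpow_mul_div_rpow hxs hy γ]
    field_simp
  refine le_of_mul_le_mul_left ?_ hm
  rw [key, ← hfit]
  have := mul_rpow_le_sub_add_mul_rpow hγ hγm hu
  have : 0 ≤ δ * xs ^ γ := by positivity
  nlinarith

lemma smoothFit_le (hγ : 0 < γ) (hγm : γ ≤ m) (hδ : 0 ≤ δ) (hxs : 0 < xs) (hy : 0 < y)
    (hyxs : y ≤ xs) : δ * (γ / m) * xs ^ (γ - m) * y ^ m ≤ δ * y ^ γ := by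
  have hm : 0 < m := hγ.trans_le hγm
  have hu : 0 < y / xs := div_pos hy hxs
  rw [mul_assoc _ (xs ^ (γ - m)), rpow_sub_mul_rpow_eq hxs hy.le,
    rpow_eq_rpow_mul_div_rpow hxs hy.le γ]
  calc δ * (γ / m) * (xs ^ γ * (y / xs) ^ m) ≤ δ * 1 * (xs ^ γ * (y / xs) ^ γ) := by
        gcongr _ * ?_ * (_ * ?_)
        · exact (div_le_one hm).2 hγm
        · exact Real.rpow_le_rpow_of_exponent_ge hu ((div_le_one hxs).2 hyxs) hγm
    _ = δ * (xs ^ γ * (y / xs) ^ γ) := by ring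

lemma mul_le_of_threshold_le {r d : ℝ} (hr : 0 ≤ r) (hγ : 0 < γ) (hγm : γ ≤ m) (hδ : 0 ≤ δ)
    (hxs : 0 < xs) (hfit : (m - γ) * δ * xs ^ γ = m * c) (hdrift : r * (m - γ) ≤ m * d)
    (hxsy : xs ≤ y) : r * c ≤ δ * d * y ^ γ := by
  have hm : 0 < m := hγ.trans_le hγm
  have hmono : xs ^ γ ≤ y ^ γ := Real.rpow_le_rpow hxs.le hxsy hγ.le
  have : 0 ≤ δ * y ^ γ := mul_nonneg hδ (Real.rpow_nonneg (hxs.le.trans hxsy) γ)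
  refine le_of_mul_le_mul_left ?_ hm
  calc m * (r * c) = r * ((m - γ) * δ * xs ^ γ) := by rw [hfit]; ring
    _ ≤ r * ((m - γ) * δ * y ^ γ) := by gcongr
    _ = r * (m - γ) * (δ * y ^ γ) := by ring
    _ ≤ m * d * (δ * y ^ γ) := by gcongr
    _ = m * (δ * d * y ^ γ) := by ring

end SmoothFit

noncomputable def hjbResidual (r γ b σ : ℝ) (v : ℝ → ℝ) (x : ℝ) : ℝ :=
  r * v x - Lop b σ v x - x ^ γ

/-- The QVI system when regimes `11, 12` share the value `v` and `21, 22` share `w`. -/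
def SolvesPairQVI (r γ c12 c21 b₁ σ₁ b₂ σ₂ : ℝ) (v w : ℝ → ℝ) (x : ℝ) : Prop :=
  min (hjbResidual r γ b₁ σ₁ v x) (v x - (w x - c12)) = 0 ∧
  min (hjbResidual r γ b₂ σ₂ w x) (w x - (v x - c21)) = 0

/-- The `max` with `v x - (v x + χ) = -χ ≤ 0` in each row of `solvesQVI` changes nothing. -/
lemma SolvesPairQVI.solvesQVI {r γ c12 c21 χ12 χ21 b₁ σ₁ b₂ σ₂ x : ℝ} {v w : ℝ → ℝ}
    (h : SolvesPairQVI r γ c12 c21 b₁ σ₁ b₂ σ₂ v w x) (hχ12 : 0 ≤ χ12) (hχ21 : 0 ≤ χ21) :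
    solvesQVI r γ c12 c21 χ12 χ21 b₁ σ₁ b₁ σ₁ b₂ σ₂ b₂ σ₂ v v w w x := by
  obtain ⟨hv, hw⟩ := h
  unfold hjbResidual at hv hw
  unfold _root_.solvesQVI
  rw [hv, hw]
  refine ⟨?_, ?_, ?_, ?_⟩ <;> exact max_eq_left (by linarith)

lemma hjbResidual_const_mul_rpow {r γ b σ K x : ℝ} (hK : K * (r - gbmSymbol b σ γ) = 1)
    (hx : 0 < x) : hjbResidual r γ b σ (fun y => K * y ^ γ) x = 0 := by
  rw [hjbResidual, Lop_of_eventuallyEq (c := 0) (q := 0) (d := 0) hx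
    (Eventually.of_forall fun z => by ring)]
  linear_combination x ^ γ * hK

section Candidate

variable {r γ m c c21 K₁ K₂ xs b σ b₂ σ₂ x : ℝ}

/-- The paper's `v11 = v12`, with `A = (K₂ - K₁) (γ / m) xs ^ (γ - m)`. -/
noncomputable def candidateValue (γ m K₁ K₂ c xs : ℝ) (y : ℝ) : ℝ :=
  if y < xs then K₁ * y ^ γ + (K₂ - K₁) * (γ / m) * xs ^ (γ - m) * y ^ m else K₂ * y ^ γ - c

lemma hjbResidual_candidateValue_of_lt (hSm : gbmSymbol b σ m = r)
    (hK₁ : K₁ * (r - gbmSymbol b σ γ) = 1) (hx : 0 < x) (hlt : x < xs) :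
    hjbResidual r γ b σ (candidateValue γ m K₁ K₂ c xs) x = 0 := by
  have hv : candidateValue γ m K₁ K₂ c xs
      =ᶠ[𝓝 x] fun z => K₁ * z ^ γ + (K₂ - K₁) * (γ / m) * xs ^ (γ - m) * z ^ m + 0 := by
    filter_upwards [Iio_mem_nhds hlt] with y (hy : y < xs)
    simp [candidateValue, hy]
  rw [hjbResidual, Lop_of_eventuallyEq hx hv, hSm, candidateValue, if_pos hlt]
  linear_combination x ^ γ * hK₁

lemma hjbResidual_candidateValue_nonneg_of_gt (hr : 0 ≤ r) (hγ : 0 < γ) (hγm : γ < m)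
    (hSm : gbmSymbol b σ m = r) (hK₁ : K₁ * (r - gbmSymbol b σ γ) = 1) (hK : K₁ ≤ K₂)
    (hxs : 0 < xs) (hfit : (m - γ) * (K₂ - K₁) * xs ^ γ = m * c) (hgt : xs < x) :
    0 ≤ hjbResidual r γ b σ (candidateValue γ m K₁ K₂ c xs) x := by
  have hv : candidateValue γ m K₁ K₂ c xs =ᶠ[𝓝 x] fun z => K₂ * z ^ γ + 0 * z ^ γ + -c := by
    filter_upwards [Ioi_mem_nhds hgt] with y (hy : xs < y)
    simp only [candidateValue, if_neg (not_lt.2 hy.le)]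
    ring
  have := mul_le_of_threshold_le hr hγ hγm.le (sub_nonneg.2 hK) hxs hfit
    (r_mul_sub_le_mul_sub_gbmSymbol hSm hγ.le hγm.le) hgt.le
  rw [hjbResidual, Lop_of_eventuallyEq (hxs.trans hgt) hv, candidateValue, if_neg (not_lt.2 hgt.le)]
  linear_combination this - x ^ γ * hK₁

lemma solvesPairQVI_candidateValue_of_lt (hγ : 0 < γ) (hγm : γ < m)
    (hSm : gbmSymbol b σ m = r) (hK₁ : K₁ * (r - gbmSymbol b σ γ) = 1)
    (hK₂ : K₂ * (r - gbmSymbol b₂ σ₂ γ) = 1) (hK : K₁ ≤ K₂) (hxs : 0 < xs)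
    (hfit : (m - γ) * (K₂ - K₁) * xs ^ γ = m * c) (hc21 : 0 ≤ c21) (hx : 0 < x) (hlt : x < xs) :
    SolvesPairQVI r γ c c21 b σ b₂ σ₂ (candidateValue γ m K₁ K₂ c xs) (fun y => K₂ * y ^ γ) x := by
  have hδ := sub_nonneg.2 hK
  have hstay := sub_smoothFit_le hγ hγm.le hδ hxs hfit hx.le
  have hdominate := smoothFit_le hγ hγm.le hδ hxs hx hlt.le
  constructor
  · rw [hjbResidual_candidateValue_of_lt hSm hK₁ hx hlt, candidateValue, if_pos hlt]
    exact min_eq_left (by linarith)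
  · rw [hjbResidual_const_mul_rpow hK₂ hx, candidateValue, if_pos hlt]
    exact min_eq_left (by linarith)

lemma solvesPairQVI_candidateValue_of_gt (hr : 0 ≤ r) (hγ : 0 < γ) (hγm : γ < m)
    (hSm : gbmSymbol b σ m = r) (hK₁ : K₁ * (r - gbmSymbol b σ γ) = 1)
    (hK₂ : K₂ * (r - gbmSymbol b₂ σ₂ γ) = 1) (hK : K₁ ≤ K₂) (hxs : 0 < xs)
    (hfit : (m - γ) * (K₂ - K₁) * xs ^ γ = m * c) (hc : 0 ≤ c) (hc21 : 0 ≤ c21) (hgt : xs < x) :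
    SolvesPairQVI r γ c c21 b σ b₂ σ₂ (candidateValue γ m K₁ K₂ c xs) (fun y => K₂ * y ^ γ) x := by
  have hres := hjbResidual_candidateValue_nonneg_of_gt hr hγ hγm hSm hK₁ hK hxs hfit hgt
  constructor
  · rw [candidateValue, if_neg (not_lt.2 hgt.le), sub_self]
    exact min_eq_right hres
  · rw [hjbResidual_const_mul_rpow hK₂ (hxs.trans hgt), candidateValue, if_neg (not_lt.2 hgt.le)]
    exact min_eq_left (by linarith)

end Candidate

theorem thm4_2_B1_general
    (r γ c12 c21 χ12 χ21 : ℝ)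
    (b11 σ11 b12 σ12 b21 σ21 b22 σ22 : ℝ)
    (K11 K21 : ℝ)
    (hr : 0 < r) (hγ0 : 0 < γ)
    (hσ11 : 0 < σ11)
    (hd11 : 0 < r - b11*γ + (1/2)*σ11^2*γ*(1-γ))
    (hd21 : 0 < r - b21*γ + (1/2)*σ21^2*γ*(1-γ))
    (hK11 : K11 = 1/(r - b11*γ + (1/2)*σ11^2*γ*(1-γ)))
    (hK21 : K21 = 1/(r - b21*γ + (1/2)*σ21^2*γ*(1-γ)))
    (heqb12 : b12 = b11) (heqσ12 : σ12 = σ11)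
    (heqb22 : b22 = b21) (heqσ22 : σ22 = σ21)
    (K₁ K₂ : ℝ) (hK₁ : K₁ = K11) (hK₂ : K₂ = K21)
    (hKlt : K₁ < K₂)
    (m : ℝ) (hm : m = 1/2 - b11/σ11^2 + Real.sqrt ((1/2 - b11/σ11^2)^2 + 2*r/σ11^2))
    (xs A : ℝ)
    (hxs : xs = (m * c12 / ((m - γ) * (K₂ - K₁))) ^ (1/γ))
    (hA : A = (K₂ - K₁) * (γ / m) * xs ^ (γ - m))
    (hc12 : 0 < c12) (hc21 : 0 < c21) (hχ12 : 0 < χ12) (hχ21 : 0 < χ21)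
    :
    ∀ x : ℝ, 0 < x → x ≠ xs →
      solvesQVI r γ c12 c21 χ12 χ21 b11 σ11 b12 σ12 b21 σ21 b22 σ22
        (fun y => if y < xs then K₁ * y ^ γ + A * y ^ m else K₂ * y ^ γ - c12)
        (fun y => if y < xs then K₁ * y ^ γ + A * y ^ m else K₂ * y ^ γ - c12)
        (fun y => K₂ * y ^ γ)
        (fun y => K₂ * y ^ γ) x := by
  intro x hx hxx
  subst b12 σ12 b22 σ22 hA hK₁ hK₂
  have hSγ : gbmSymbol b11 σ11 γ < r := by linarith [sub_gbmSymbol b11 σ11 r γ]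
  obtain ⟨hSm, hγm⟩ := gbmSymbol_eq_and_lt_of_lt hσ11.ne' hm hSγ
  have hK₁ := mul_sub_gbmSymbol_eq_one hd11 hK11
  have hK₂ := mul_sub_gbmSymbol_eq_one hd21 hK21
  obtain ⟨hxs0, hfit⟩ := threshold_pos_and_smoothFit hγ0 hγm (sub_pos.2 hKlt) hc12 hxs
  refine SolvesPairQVI.solvesQVI (v := candidateValue γ m K₁ K₂ c12 xs) ?_ hχ12.le hχ21.le
  rcases hxx.lt_or_gt with hlt | hgt
  · exact solvesPairQVI_candidateValue_of_lt hγ0 hγm hSm hK₁ hK₂ hKlt.le hxs0 hfit hc21.le hx hlt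
  · exact solvesPairQVI_candidateValue_of_gt hr.le hγ0 hγm hSm hK₁ hK₂ hKlt.le hxs0 hfit
      hc12.le hc21.le hgt

theorem thm4_2_B1
    (r γ c12 c21 χ12 χ21 : ℝ)
    (b11 σ11 b12 σ12 b21 σ21 b22 σ22 : ℝ)
    (K11 K12 K21 K22 : ℝ)
    (hr : 0 < r) (hγ0 : 0 < γ) (hγ1 : γ < 1)
    (hσ11 : 0 < σ11) (hσ12 : 0 < σ12) (hσ21 : 0 < σ21) (hσ22 : 0 < σ22)
    (hd11 : 0 < r - b11*γ + (1/2)*σ11^2*γ*(1-γ))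
    (hd12 : 0 < r - b12*γ + (1/2)*σ12^2*γ*(1-γ))
    (hd21 : 0 < r - b21*γ + (1/2)*σ21^2*γ*(1-γ))
    (hd22 : 0 < r - b22*γ + (1/2)*σ22^2*γ*(1-γ))
    (hrb11 : b11 < r) (hrb12 : b12 < r) (hrb21 : b21 < r) (hrb22 : b22 < r)
    (hK11 : K11 = 1/(r - b11*γ + (1/2)*σ11^2*γ*(1-γ)))
    (hK12 : K12 = 1/(r - b12*γ + (1/2)*σ12^2*γ*(1-γ)))
    (hK21 : K21 = 1/(r - b21*γ + (1/2)*σ21^2*γ*(1-γ)))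
    (hK22 : K22 = 1/(r - b22*γ + (1/2)*σ22^2*γ*(1-γ)))
    (heqb12 : b12 = b11) (heqσ12 : σ12 = σ11)
    (heqb22 : b22 = b21) (heqσ22 : σ22 = σ21)
    (K₁ K₂ : ℝ) (hK₁ : K₁ = K11) (hK₂ : K₂ = K21)
    (hKlt : K₁ < K₂)
    (m : ℝ) (hm : m = 1/2 - b11/σ11^2 + Real.sqrt ((1/2 - b11/σ11^2)^2 + 2*r/σ11^2))
    (xs A : ℝ)
    (hxs : xs = (m * c12 / ((m - γ) * (K₂ - K₁))) ^ (1/γ))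
    (hA : A = (K₂ - K₁) * (γ / m) * xs ^ (γ - m))
    (hc12 : 0 < c12) (hc21 : 0 < c21) (hχ12 : 0 < χ12) (hχ21 : 0 < χ21)
    :
    ∀ x : ℝ, 0 < x → x ≠ xs →
      solvesQVI r γ c12 c21 χ12 χ21 b11 σ11 b12 σ12 b21 σ21 b22 σ22
        (fun y => if y < xs then K₁ * y ^ γ + A * y ^ m else K₂ * y ^ γ - c12)
        (fun y => if y < xs then K₁ * y ^ γ + A * y ^ m else K₂ * y ^ γ - c12)
        (fun y => K₂ * y ^ γ)
        (fun y => K₂ * y ^ γ) x :=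
  thm4_2_B1_general r γ c12 c21 χ12 χ21 b11 σ11 b12 σ12 b21 σ21 b22 σ22 K11 K21 hr hγ0 hσ11 hd11
    hd21 hK11 hK21 heqb12 heqσ12 heqb22 heqσ22 K₁ K₂ hK₁ hK₂ hKlt m hm xs A hxs hA hc12 hc21 hχ12
    hχ21
end

section
/- Theorem 4.4, case B2. In addition to the common setup, assume b11 = b21, σ11 = σ21, b12 = b22, σ12 = σ22, and K₁ := K_{11} = K_{21} < K_{12} = K_{22} =: K₂; assume c12 < 0, c21 > 0, χ12 > 0, χ21 > 0 and c12 + c21 > 0 (Condition B2). Let m⁺ := m_{12}⁺ (= m_{22}⁺), x* := (m⁺·χ21 / ((m⁺ − γ)·(K₂ − K₁)))^{1/γ} and A := −(K₂ − K₁)·(γ/m⁺)·(x*)^{γ − m⁺}. Define v11(x) = K₁·x^γ − c12 and v21(x) = K₁·x^γ for all x > 0; v12(x) = K₂·x^γ + A·x^{m⁺} − c12 for 0 < x < x* and = K₁·x^γ − c12 + χ21 for x ≥ x*; and v22(x) = K₂·x^γ + A·x^{m⁺} for 0 < x < x* and = K₁·x^γ + χ21 for x ≥ x*. Then this quadruple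 solves the QVI system at every x > 0 with x ≠ x*. -/
open Filter Topology

/-- The symbol `ψ` of the Euler operator `Lop b σ`: `Lop b σ (x ↦ x ^ p) = ψ(p) x ^ p` on
`(0, ∞)`. The exponents `m^±` are the roots of `ψ(p) = r`, and `K = 1 / (r - ψ(γ))`. -/
noncomputable def eulerSymbol (b σ p : ℝ) : ℝ := b * p + σ ^ 2 / 2 * p * (p - 1)

noncomputable def eulerPlusRoot (b σ r : ℝ) : ℝ :=
  1 / 2 - b / σ ^ 2 + √((1 / 2 - b / σ ^ 2) ^ 2 + 2 * r / σ ^ 2)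

lemma eulerSymbol_sub_eq {b σ : ℝ} (r p : ℝ) (hσ : σ ≠ 0) :
    eulerSymbol b σ p - r
      = σ ^ 2 / 2 *
        ((p - (1 / 2 - b / σ ^ 2)) ^ 2 - ((1 / 2 - b / σ ^ 2) ^ 2 + 2 * r / σ ^ 2)) := by
  unfold eulerSymbol
  field_simp
  ring

lemma eulerSymbol_eulerPlusRoot {b σ r : ℝ} (hσ : σ ≠ 0) (hr : 0 ≤ r) :
    eulerSymbol b σ (eulerPlusRoot b σ r) = r := by
  rw [← sub_eq_zero, eulerSymbol_sub_eq r _ hσ, eulerPlusRoot, add_sub_cancel_left,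
    Real.sq_sqrt (by positivity), sub_self, mul_zero]

lemma lt_eulerPlusRoot {b σ r p : ℝ} (hσ : σ ≠ 0) (h : eulerSymbol b σ p < r) :
    p < eulerPlusRoot b σ r := by
  have hsq : (p - (1 / 2 - b / σ ^ 2)) ^ 2 < (1 / 2 - b / σ ^ 2) ^ 2 + 2 * r / σ ^ 2 := by
    have hσ2 : 0 < σ ^ 2 / 2 := by positivity
    have := eulerSymbol_sub_eq (b := b) r p hσ
    nlinarith
  have := Real.lt_sqrt_of_sq_lt hsq
  rw [eulerPlusRoot]
  linarith

lemma mul_eulerSymbol_sub_mul_eulerSymbol (b σ p q : ℝ) :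
    p * eulerSymbol b σ q - q * eulerSymbol b σ p = σ ^ 2 / 2 * p * q * (q - p) := by
  unfold eulerSymbol
  ring

lemma Lop_congr_of_eventuallyEq {b σ x : ℝ} {v w : ℝ → ℝ} (h : v =ᶠ[𝓝 x] w) :
    Lop b σ v x = Lop b σ w x := by
  rw [Lop, Lop, h.deriv.deriv_eq, h.deriv_eq]

lemma hasDerivAt_mul_rpow_add_mul_rpow_add_const (c₁ p c₂ q c₃ : ℝ) {x : ℝ} (hx : 0 < x) :
    HasDerivAt (fun y => c₁ * y ^ p + c₂ * y ^ q + c₃)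
      (c₁ * p * x ^ (p - 1) + c₂ * q * x ^ (q - 1) + 0) x := by
  have h₁ := (Real.hasDerivAt_rpow_const (p := p) (Or.inl hx.ne')).const_mul c₁
  have h₂ := (Real.hasDerivAt_rpow_const (p := q) (Or.inl hx.ne')).const_mul c₂
  exact ((h₁.add h₂).add_const c₃).congr_deriv (by ring)

lemma Lop_mul_rpow_add_mul_rpow_add_const (b σ c₁ p c₂ q c₃ : ℝ) {x : ℝ} (hx : 0 < x) :
    Lop b σ (fun y => c₁ * y ^ p + c₂ * y ^ q + c₃) x
      = c₁ * eulerSymbol b σ p * x ^ p + c₂ * eulerSymbol b σ q * x ^ q := by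
  have hderiv : deriv (fun y => c₁ * y ^ p + c₂ * y ^ q + c₃)
      =ᶠ[𝓝 x] fun y => c₁ * p * y ^ (p - 1) + c₂ * q * y ^ (q - 1) + 0 :=
    (eventually_gt_nhds hx).mono fun y hy =>
      (hasDerivAt_mul_rpow_add_mul_rpow_add_const c₁ p c₂ q c₃ hy).deriv
  rw [Lop, hderiv.deriv_eq,
    (hasDerivAt_mul_rpow_add_mul_rpow_add_const (c₁ * p) (p - 1) (c₂ * q) (q - 1) 0 hx).deriv,
    (hasDerivAt_mul_rpow_add_mul_rpow_add_const c₁ p c₂ q c₃ hx).deriv]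
  simp only [Real.rpow_sub_one hx.ne', eulerSymbol]
  field_simp
  ring

lemma mul_sub_Lop_sub_rpow_of_eventually {r b σ c₁ p c₂ q c₃ x : ℝ} {v : ℝ → ℝ} (hx : 0 < x)
    (hv : ∀ᶠ y in 𝓝 x, v y = c₁ * y ^ p + c₂ * y ^ q + c₃) :
    r * v x - Lop b σ v x - x ^ p
      = (c₁ * (r - eulerSymbol b σ p) - 1) * x ^ p + c₂ * (r - eulerSymbol b σ q) * x ^ q
        + r * c₃ := by
  rw [Lop_congr_of_eventuallyEq hv, Lop_mul_rpow_add_mul_rpow_add_const b σ c₁ p c₂ q c₃ hx,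
    hv.self_of_nhds]
  ring

lemma mul_sub_Lop_sub_rpow_of_eventually' {r b σ c₁ p c₃ x : ℝ} {v : ℝ → ℝ} (hx : 0 < x)
    (hv : ∀ᶠ y in 𝓝 x, v y = c₁ * y ^ p + c₃) :
    r * v x - Lop b σ v x - x ^ p = (c₁ * (r - eulerSymbol b σ p) - 1) * x ^ p + r * c₃ := by
  rw [mul_sub_Lop_sub_rpow_of_eventually (c₁ := c₁) (c₂ := 0) (q := p) (c₃ := c₃) hx
    (hv.mono fun y h => h.trans (by ring))]
  ring

lemma rpow_mul_rpow_sub_le {z s γ m : ℝ} (hz : 0 ≤ z) (hs : 0 ≤ s) (hγ : 0 < γ) (hγm : γ ≤ m) :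
    z ^ γ * s ^ (m - γ) ≤ γ / m * z ^ m + (1 - γ / m) * s ^ m := by
  have hm : 0 < m := hγ.trans_le hγm
  have h := Real.geom_mean_le_arith_mean2_weighted (div_pos hγ hm).le
    (sub_nonneg.2 ((div_le_one hm).2 hγm)) (Real.rpow_nonneg hz m) (Real.rpow_nonneg hs m)
    (add_sub_cancel _ _)
  rwa [← Real.rpow_mul hz, ← Real.rpow_mul hs, mul_one_sub, mul_div_cancel₀ _ hm.ne'] at h

lemma mul_rpow_add_mul_rpow_le {D A s z γ m : ℝ} (hD : 0 ≤ D) (hs : 0 < s) (hz : 0 ≤ z)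
    (hγ : 0 < γ) (hγm : γ ≤ m) (hA : A = -D * (γ / m) * s ^ (γ - m)) :
    D * z ^ γ + A * z ^ m ≤ D * (1 - γ / m) * s ^ γ := by
  have hY := mul_le_mul_of_nonneg_left (rpow_mul_rpow_sub_le hz hs.le hγ hγm)
    (mul_nonneg hD (Real.rpow_nonneg hs.le (γ - m)))
  have h₁ : s ^ (γ - m) * s ^ (m - γ) = 1 := by rw [← Real.rpow_add hs]; simp
  have h₂ : s ^ (γ - m) * s ^ m = s ^ γ := by rw [← Real.rpow_add hs]; ring_nf
  subst hA
  linear_combination hY - D * z ^ γ * h₁ + D * (1 - γ / m) * h₂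

lemma mul_rpow_add_mul_rpow_nonneg {D A s z γ m : ℝ} (hD : 0 ≤ D) (hz : 0 < z) (hzs : z ≤ s)
    (hγ : 0 < γ) (hγm : γ ≤ m) (hA : A = -D * (γ / m) * s ^ (γ - m)) :
    0 ≤ D * z ^ γ + A * z ^ m := by
  have hm : 0 < m := hγ.trans_le hγm
  have hs : 0 < s := hz.trans_le hzs
  have hzm : s ^ (γ - m) * z ^ m ≤ z ^ γ := calc
    s ^ (γ - m) * z ^ m = s ^ (γ - m) * z ^ (m - γ) * z ^ γ := by
      rw [mul_assoc, ← Real.rpow_add hz]; ring_nf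
    _ ≤ s ^ (γ - m) * s ^ (m - γ) * z ^ γ := by
      gcongr
    _ = z ^ γ := by rw [← Real.rpow_add hs]; simp
  have hw : 0 ≤ D * (γ / m) := mul_nonneg hD (div_pos hγ hm).le
  have hw' : 0 ≤ D * (1 - γ / m) := mul_nonneg hD (sub_nonneg.2 ((div_le_one hm).2 hγm))
  subst hA
  nlinarith [mul_le_mul_of_nonneg_left hzm hw, mul_nonneg hw' (Real.rpow_nonneg hz.le γ)]

lemma mul_one_sub_div_mul_rpow_eq {D γ m χ : ℝ} (hD : 0 < D) (hγ : 0 < γ) (hγm : γ < m)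
    (hχ : 0 ≤ χ) : D * (1 - γ / m) * ((m * χ / ((m - γ) * D)) ^ (1 / γ)) ^ γ = χ := by
  have hm : 0 < m := hγ.trans hγm
  have hmγ : 0 < m - γ := sub_pos.2 hγm
  rw [← Real.rpow_mul (by positivity), one_div_mul_cancel hγ.ne', Real.rpow_one]
  field_simp

lemma mul_le_one_sub_mul_mul_rpow {r b σ γ m K₁ K₂ s x χ : ℝ} (hγ : 0 < γ) (hγm : γ < m)
    (hs : 0 < s) (hsx : s ≤ x) (hK : K₁ < K₂) (hη : 0 < r - eulerSymbol b σ γ)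
    (hK₂ : K₂ * (r - eulerSymbol b σ γ) = 1) (hψm : eulerSymbol b σ m = r)
    (hχ : (K₂ - K₁) * (1 - γ / m) * s ^ γ = χ) :
    r * χ ≤ (1 - K₁ * (r - eulerSymbol b σ γ)) * x ^ γ := by
  have hm : 0 < m := hγ.trans hγm
  have hD : 0 ≤ (K₂ - K₁) * s ^ γ := mul_nonneg (sub_pos.2 hK).le (by positivity)
  -- equivalently `ψ(γ) / γ ≤ ψ(m) / m`
  have key : r * (m - γ) ≤ (r - eulerSymbol b σ γ) * m := by
    have hnn : 0 ≤ σ ^ 2 / 2 * γ * m * (m - γ) := by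
      have := sub_pos.2 hγm
      positivity
    linear_combination hnn - mul_eulerSymbol_sub_mul_eulerSymbol b σ γ m + γ * hψm
  calc r * χ = (K₂ - K₁) * s ^ γ * (r * (m - γ)) / m := by rw [← hχ]; field_simp
    _ ≤ (K₂ - K₁) * s ^ γ * ((r - eulerSymbol b σ γ) * m) / m := by gcongr
    _ = (K₂ - K₁) * (r - eulerSymbol b σ γ) * s ^ γ := by field_simp
    _ ≤ (K₂ - K₁) * (r - eulerSymbol b σ γ) * x ^ γ := by
      have := sub_pos.2 hK
      gcongr
    _ = (1 - K₁ * (r - eulerSymbol b σ γ)) * x ^ γ := by rw [← hK₂]; ring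

section MaxMin

variable {α : Type*} [LinearOrder α] [Zero α] {a b c : α}

lemma max_min_eq_zero_of_left_eq (ha : a = 0) (hb : 0 ≤ b) (hc : c ≤ 0) :
    max (min a b) c = 0 := by
  rw [ha, min_eq_left hb, max_eq_left hc]

lemma max_min_eq_zero_of_mid_eq (ha : 0 ≤ a) (hb : b = 0) (hc : c ≤ 0) :
    max (min a b) c = 0 := by
  rw [hb, min_eq_right ha, max_eq_left hc]

lemma max_min_eq_zero_of_right_eq (hab : min a b ≤ 0) (hc : c = 0) : max (min a b) c = 0 := by
  rw [hc, max_eq_right hab]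

end MaxMin

section CaseB2

variable {r γ c12 c21 χ12 χ21 b₁ σ₁ b₂ σ₂ K₁ K₂ m A x : ℝ} {v11 v12 v21 v22 : ℝ → ℝ}

lemma solvesQVI_of_continuation (hx : 0 < x) (hr : 0 ≤ r) (hc12 : c12 ≤ 0)
    (hcsum : 0 ≤ c12 + c21) (hχ12 : 0 ≤ χ12)
    (hK₁ : K₁ * (r - eulerSymbol b₁ σ₁ γ) = 1) (hK₂ : K₂ * (r - eulerSymbol b₂ σ₂ γ) = 1)
    (hψm : eulerSymbol b₂ σ₂ m = r)
    (hφ₀ : 0 ≤ (K₂ - K₁) * x ^ γ + A * x ^ m) (hφ₁ : (K₂ - K₁) * x ^ γ + A * x ^ m ≤ χ21)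
    (h11 : ∀ᶠ y in 𝓝 x, v11 y = K₁ * y ^ γ - c12)
    (h12 : ∀ᶠ y in 𝓝 x, v12 y = K₂ * y ^ γ + A * y ^ m - c12)
    (h21 : ∀ᶠ y in 𝓝 x, v21 y = K₁ * y ^ γ)
    (h22 : ∀ᶠ y in 𝓝 x, v22 y = K₂ * y ^ γ + A * y ^ m) :
    solvesQVI r γ c12 c21 χ12 χ21 b₁ σ₁ b₂ σ₂ b₁ σ₁ b₂ σ₂ v11 v12 v21 v22 x := by
  have R11 : r * v11 x - Lop b₁ σ₁ v11 x - x ^ γ = -(r * c12) := by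
    rw [mul_sub_Lop_sub_rpow_of_eventually' hx
      (h11.mono fun y h => h.trans (sub_eq_add_neg _ _)), hK₁]
    ring
  have R12 : r * v12 x - Lop b₂ σ₂ v12 x - x ^ γ = -(r * c12) := by
    rw [mul_sub_Lop_sub_rpow_of_eventually hx
      (h12.mono fun y h => h.trans (sub_eq_add_neg _ _)), hK₂, hψm]
    ring
  have R21 : r * v21 x - Lop b₁ σ₁ v21 x - x ^ γ = 0 := by
    rw [mul_sub_Lop_sub_rpow_of_eventually' hx
      (h21.mono fun y h => h.trans (add_zero _).symm), hK₁]
    ring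
  have R22 : r * v22 x - Lop b₂ σ₂ v22 x - x ^ γ = 0 := by
    rw [mul_sub_Lop_sub_rpow_of_eventually hx
      (h22.mono fun y h => h.trans (add_zero _).symm), hK₂, hψm]
    ring
  have hrc : 0 ≤ -(r * c12) := by nlinarith
  have e11 := h11.self_of_nhds
  have e12 := h12.self_of_nhds
  have e21 := h21.self_of_nhds
  have e22 := h22.self_of_nhds
  exact ⟨max_min_eq_zero_of_mid_eq (by linarith) (by linarith) (by linarith),
    max_min_eq_zero_of_mid_eq (by linarith) (by linarith) (by linarith),
    max_min_eq_zero_of_left_eq R21 (by linarith) (by linarith),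
    max_min_eq_zero_of_left_eq R22 (by linarith) (by linarith)⟩

lemma solvesQVI_of_switching (hx : 0 < x) (hr : 0 ≤ r) (hc12 : c12 ≤ 0)
    (hcsum : 0 ≤ c12 + c21) (hχ12 : 0 ≤ χ12) (hχ21 : 0 ≤ χ21)
    (hK₁ : K₁ * (r - eulerSymbol b₁ σ₁ γ) = 1)
    (hχ21_le : r * χ21 ≤ (1 - K₁ * (r - eulerSymbol b₂ σ₂ γ)) * x ^ γ)
    (h11 : ∀ᶠ y in 𝓝 x, v11 y = K₁ * y ^ γ - c12) (h12 : v12 x = K₁ * x ^ γ - c12 + χ21)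
    (h21 : ∀ᶠ y in 𝓝 x, v21 y = K₁ * y ^ γ)
    (h22 : ∀ᶠ y in 𝓝 x, v22 y = K₁ * y ^ γ + χ21) :
    solvesQVI r γ c12 c21 χ12 χ21 b₁ σ₁ b₂ σ₂ b₁ σ₁ b₂ σ₂ v11 v12 v21 v22 x := by
  have R11 : r * v11 x - Lop b₁ σ₁ v11 x - x ^ γ = -(r * c12) := by
    rw [mul_sub_Lop_sub_rpow_of_eventually' hx
      (h11.mono fun y h => h.trans (sub_eq_add_neg _ _)), hK₁]
    ring
  have R21 : r * v21 x - Lop b₁ σ₁ v21 x - x ^ γ = 0 := by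
    rw [mul_sub_Lop_sub_rpow_of_eventually' hx
      (h21.mono fun y h => h.trans (add_zero _).symm), hK₁]
    ring
  have R22 : r * v22 x - Lop b₂ σ₂ v22 x - x ^ γ ≤ 0 := by
    rw [mul_sub_Lop_sub_rpow_of_eventually' hx h22]
    linarith
  have hrc : 0 ≤ -(r * c12) := by nlinarith
  have e11 := h11.self_of_nhds
  have e21 := h21.self_of_nhds
  have e22 := h22.self_of_nhds
  exact ⟨max_min_eq_zero_of_mid_eq (by linarith) (by linarith) (by linarith),
    max_min_eq_zero_of_right_eq (min_le_of_right_le (by linarith)) (by linarith),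
    max_min_eq_zero_of_left_eq R21 (by linarith) (by linarith),
    max_min_eq_zero_of_right_eq (min_le_of_left_le R22) (by linarith)⟩

end CaseB2

theorem thm4_4_B2_general
    (r γ c12 c21 χ12 χ21 : ℝ)
    (b11 σ11 b12 σ12 b21 σ21 b22 σ22 : ℝ)
    (K11 K12 : ℝ)
    (hr : 0 < r) (hγ0 : 0 < γ)
    (hσ12 : 0 < σ12)
    (hd11 : 0 < r - b11*γ + (1/2)*σ11^2*γ*(1-γ))
    (hd12 : 0 < r - b12*γ + (1/2)*σ12^2*γ*(1-γ))
    (hK11 : K11 = 1/(r - b11*γ + (1/2)*σ11^2*γ*(1-γ)))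
    (hK12 : K12 = 1/(r - b12*γ + (1/2)*σ12^2*γ*(1-γ)))
    (heqb21 : b21 = b11) (heqσ21 : σ21 = σ11)
    (heqb22 : b22 = b12) (heqσ22 : σ22 = σ12)
    (K₁ K₂ : ℝ) (hK₁ : K₁ = K11) (hK₂ : K₂ = K12)
    (hKlt : K₁ < K₂)
    (m : ℝ) (hm : m = 1/2 - b12/σ12^2 + Real.sqrt ((1/2 - b12/σ12^2)^2 + 2*r/σ12^2))
    (xs A : ℝ)
    (hxs : xs = (m * χ21 / ((m - γ) * (K₂ - K₁))) ^ (1/γ))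
    (hA : A = -(K₂ - K₁) * (γ / m) * xs ^ (γ - m))
    (hc12 : c12 < 0) (hχ12 : 0 < χ12) (hχ21 : 0 < χ21)
    (hcsum : 0 < c12 + c21)
    :
    ∀ x : ℝ, 0 < x → x ≠ xs →
      solvesQVI r γ c12 c21 χ12 χ21 b11 σ11 b12 σ12 b21 σ21 b22 σ22
        (fun y => K₁ * y ^ γ - c12)
        (fun y => if y < xs then K₂ * y ^ γ + A * y ^ m - c12 else K₁ * y ^ γ - c12 + χ21)
        (fun y => K₁ * y ^ γ)
        (fun y => if y < xs then K₂ * y ^ γ + A * y ^ m else K₁ * y ^ γ + χ21) x := by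
  have hsymbol : ∀ b σ : ℝ, r - eulerSymbol b σ γ = r - b * γ + (1 / 2) * σ ^ 2 * γ * (1 - γ) :=
    fun b σ => by unfold eulerSymbol; ring
  have hK₁' : K₁ * (r - eulerSymbol b11 σ11 γ) = 1 := by
    rw [hsymbol, hK₁, hK11, one_div_mul_cancel hd11.ne']
  have hK₂' : K₂ * (r - eulerSymbol b12 σ12 γ) = 1 := by
    rw [hsymbol, hK₂, hK12, one_div_mul_cancel hd12.ne']
  have hψm : eulerSymbol b12 σ12 m = r := hm ▸ eulerSymbol_eulerPlusRoot hσ12.ne' hr.le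
  have hγm : γ < m := hm ▸ lt_eulerPlusRoot hσ12.ne' (by linarith [hsymbol b12 σ12])
  have hD : 0 < K₂ - K₁ := sub_pos.2 hKlt
  have hs : 0 < xs := hxs ▸ Real.rpow_pos_of_pos
    (div_pos (mul_pos (hγ0.trans hγm) hχ21) (mul_pos (sub_pos.2 hγm) hD)) _
  have hχ : (K₂ - K₁) * (1 - γ / m) * xs ^ γ = χ21 :=
    hxs ▸ mul_one_sub_div_mul_rpow_eq hD hγ0 hγm hχ21.le
  subst b21 σ21 b22 σ22
  intro x hx hxne
  rcases hxne.lt_or_gt with hlt | hgt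
  · have hbelow := eventually_lt_nhds hlt
    exact solvesQVI_of_continuation hx hr.le hc12.le hcsum.le hχ12.le hK₁' hK₂' hψm
      (mul_rpow_add_mul_rpow_nonneg hD.le hx hlt.le hγ0 hγm.le hA)
      ((mul_rpow_add_mul_rpow_le hD.le hs hx.le hγ0 hγm.le hA).trans_eq hχ)
      (.of_forall fun _ => rfl) (hbelow.mono fun _ hy => if_pos hy)
      (.of_forall fun _ => rfl) (hbelow.mono fun _ hy => if_pos hy)
  · have habove := eventually_gt_nhds hgt
    exact solvesQVI_of_switching hx hr.le hc12.le hcsum.le hχ12.le hχ21.le hK₁'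
      (mul_le_one_sub_mul_mul_rpow hγ0 hγm hs hgt.le hKlt (by linarith [hsymbol b12 σ12])
        hK₂' hψm hχ)
      (.of_forall fun _ => rfl) (if_neg hgt.not_gt)
      (.of_forall fun _ => rfl) (habove.mono fun _ hy => if_neg hy.not_gt)

theorem thm4_4_B2
    (r γ c12 c21 χ12 χ21 : ℝ)
    (b11 σ11 b12 σ12 b21 σ21 b22 σ22 : ℝ)
    (K11 K12 K21 K22 : ℝ)
    (hr : 0 < r) (hγ0 : 0 < γ) (hγ1 : γ < 1)
    (hσ11 : 0 < σ11) (hσ12 : 0 < σ12) (hσ21 : 0 < σ21) (hσ22 : 0 < σ22)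
    (hd11 : 0 < r - b11*γ + (1/2)*σ11^2*γ*(1-γ))
    (hd12 : 0 < r - b12*γ + (1/2)*σ12^2*γ*(1-γ))
    (hd21 : 0 < r - b21*γ + (1/2)*σ21^2*γ*(1-γ))
    (hd22 : 0 < r - b22*γ + (1/2)*σ22^2*γ*(1-γ))
    (hrb11 : b11 < r) (hrb12 : b12 < r) (hrb21 : b21 < r) (hrb22 : b22 < r)
    (hK11 : K11 = 1/(r - b11*γ + (1/2)*σ11^2*γ*(1-γ)))
    (hK12 : K12 = 1/(r - b12*γ + (1/2)*σ12^2*γ*(1-γ)))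
    (hK21 : K21 = 1/(r - b21*γ + (1/2)*σ21^2*γ*(1-γ)))
    (hK22 : K22 = 1/(r - b22*γ + (1/2)*σ22^2*γ*(1-γ)))
    (heqb21 : b21 = b11) (heqσ21 : σ21 = σ11)
    (heqb22 : b22 = b12) (heqσ22 : σ22 = σ12)
    (K₁ K₂ : ℝ) (hK₁ : K₁ = K11) (hK₂ : K₂ = K12)
    (hKlt : K₁ < K₂)
    (m : ℝ) (hm : m = 1/2 - b12/σ12^2 + Real.sqrt ((1/2 - b12/σ12^2)^2 + 2*r/σ12^2))
    (xs A : ℝ)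
    (hxs : xs = (m * χ21 / ((m - γ) * (K₂ - K₁))) ^ (1/γ))
    (hA : A = -(K₂ - K₁) * (γ / m) * xs ^ (γ - m))
    (hc12 : c12 < 0) (hc21 : 0 < c21) (hχ12 : 0 < χ12) (hχ21 : 0 < χ21)
    (hcsum : 0 < c12 + c21)
    :
    ∀ x : ℝ, 0 < x → x ≠ xs →
      solvesQVI r γ c12 c21 χ12 χ21 b11 σ11 b12 σ12 b21 σ21 b22 σ22
        (fun y => K₁ * y ^ γ - c12)
        (fun y => if y < xs then K₂ * y ^ γ + A * y ^ m - c12 else K₁ * y ^ γ - c12 + χ21)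
        (fun y => K₁ * y ^ γ)
        (fun y => if y < xs then K₂ * y ^ γ + A * y ^ m else K₁ * y ^ γ + χ21) x :=
  thm4_4_B2_general r γ c12 c21 χ12 χ21 b11 σ11 b12 σ12 b21 σ21 b22 σ22 K11 K12 hr hγ0 hσ12 hd11
    hd12 hK11 hK12 heqb21 heqσ21 heqb22 heqσ22 K₁ K₂ hK₁ hK₂ hKlt m hm xs A hxs hA hc12 hχ12 hχ21
    hcsum
end
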